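/- arXiv:2603.05533 — 2 statements merged into one kernel-verified Lean document; each statement's English description precedes it below -/
import Mathlib

section
/- Let g : ℝ² → ℝ be smooth. Then g satisfies ∂⁴g/∂x₁⁴ = 0, ∂⁴g/∂x₂⁴ = 0, and ∂⁴g/∂x₁²∂x₂² = 0 identically on ℝ² if and only if there exist polynomial functions p, q, r, w : ℝ → ℝ, each of degree at most 3, such that g(x₁,x₂) = p(x₁) + x₂ q(x₁) + r(x₂) + x₁ w(x₂) for all (x₁,x₂) ∈ ℝ². (This is the form of the fields g_i in the universal displacements of the tetrahedral strain-gradient class 𝕋 ⊕ ℤ₂ᶜ and of the fields k_i in the ∞-gonal class 𝕆(2) ⊕ ℤ₂ᶜ.) -/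
/-- Partial derivative of a scalar field on `ℝ²` in the `j`-th coordinate direction. -/
noncomputable def pd2 (j : Fin 2) (f : (Fin 2 → ℝ) → ℝ) : (Fin 2 → ℝ) → ℝ :=
  fun x => fderiv ℝ f x (Pi.single j 1)

/-- A polynomial function of degree at most 3. -/
def IsPolyDeg3 (p : ℝ → ℝ) : Prop :=
  ∃ a₀ a₁ a₂ a₃ : ℝ, ∀ t, p t = a₀ + a₁ * t + a₂ * t ^ 2 + a₃ * t ^ 3

/- ### Auxiliary 1-D machinery -/

def cub (a b c d : ℝ) : ℝ → ℝ := fun t => a + b * t + c * t ^ 2 + d * t ^ 3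

lemma cub_hasDerivAt (a b c d t : ℝ) :
    HasDerivAt (cub a b c d) (cub b (2 * c) (3 * d) 0 t) t := by
  have h2 : HasDerivAt (fun s : ℝ => s ^ 2) (2 * t) t := by simpa using hasDerivAt_pow 2 t
  have h3 : HasDerivAt (fun s : ℝ => s ^ 3) (3 * t ^ 2) t := by simpa using hasDerivAt_pow 3 t
  have h := (((hasDerivAt_const t a).add ((hasDerivAt_id t).const_mul b)).add
    (h2.const_mul c)).add (h3.const_mul d)
  have e : 0 + b * 1 + c * (2 * t) + d * (3 * t ^ 2) = cub b (2 * c) (3 * d) 0 t := by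
    simp only [cub]; ring
  exact e ▸ h

lemma cub_differentiable (a b c d : ℝ) : Differentiable ℝ (cub a b c d) :=
  fun t => (cub_hasDerivAt a b c d t).differentiableAt

lemma cub_deriv (a b c d t : ℝ) : deriv (cub a b c d) t = cub b (2 * c) (3 * d) 0 t :=
  (cub_hasDerivAt a b c d t).deriv

lemma eq_of_deriv_eq {f h : ℝ → ℝ} (hf : Differentiable ℝ f) (hh : Differentiable ℝ h)
    (hd : ∀ t, deriv f t = deriv h t) (h0 : f 0 = h 0) (t : ℝ) : f t = h t := by
  have key : (fun u => f u - h u) t = (fun u => f u - h u) 0 :=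
    is_const_of_deriv_eq_zero (hf.sub hh)
      (fun u => by rw [deriv_sub (hf u) (hh u), hd u, sub_self]) t 0
  have h2 : f t - h t = f 0 - h 0 := key
  linarith

lemma cubic_of_deriv4 {f : ℝ → ℝ} (hf : ContDiff ℝ (⊤ : ℕ∞) f)
    (h4 : ∀ t, deriv (deriv (deriv (deriv f))) t = 0) (t : ℝ) :
    f t = f 0 + deriv f 0 * t + deriv (deriv f) 0 / 2 * t ^ 2
      + deriv (deriv (deriv f)) 0 / 6 * t ^ 3 := by
  have hf1 : ContDiff ℝ (⊤ : ℕ∞) (deriv f) := (contDiff_infty_iff_deriv.mp hf).2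
  have hf2 : ContDiff ℝ (⊤ : ℕ∞) (deriv (deriv f)) := (contDiff_infty_iff_deriv.mp hf1).2
  have hf3 : ContDiff ℝ (⊤ : ℕ∞) (deriv (deriv (deriv f))) := (contDiff_infty_iff_deriv.mp hf2).2
  have h3c : ∀ s, deriv (deriv (deriv f)) s = deriv (deriv (deriv f)) 0 := fun s =>
    is_const_of_deriv_eq_zero (hf3.differentiable (by simp)) h4 s 0
  have h2c : ∀ s, deriv (deriv f) s
      = cub (deriv (deriv f) 0) (deriv (deriv (deriv f)) 0) 0 0 s := by
    refine eq_of_deriv_eq (hf2.differentiable (by simp)) (cub_differentiable _ _ _ _) (fun s => ?_) ?_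
    · rw [h3c s, cub_deriv]; simp [cub]
    · simp only [cub]; ring
  have h1c : ∀ s, deriv f s
      = cub (deriv f 0) (deriv (deriv f) 0) (deriv (deriv (deriv f)) 0 / 2) 0 s := by
    refine eq_of_deriv_eq (hf1.differentiable (by simp)) (cub_differentiable _ _ _ _) (fun s => ?_) ?_
    · rw [h2c s, cub_deriv]; simp only [cub]; ring
    · simp only [cub]; ring
  have h0c : ∀ s, f s = cub (f 0) (deriv f 0) (deriv (deriv f) 0 / 2)
      (deriv (deriv (deriv f)) 0 / 6) s := by
    refine eq_of_deriv_eq (hf.differentiable (by simp)) (cub_differentiable _ _ _ _) (fun s => ?_) ?_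
    · rw [h1c s, cub_deriv]; simp only [cub]; ring
    · simp only [cub]; ring
  rw [h0c t]; simp only [cub]

lemma linear_of_deriv2 {f : ℝ → ℝ} (hf : ContDiff ℝ (⊤ : ℕ∞) f)
    (h2 : ∀ t, deriv (deriv f) t = 0) (t : ℝ) :
    f t = f 0 + deriv f 0 * t := by
  have hf1 : ContDiff ℝ (⊤ : ℕ∞) (deriv f) := (contDiff_infty_iff_deriv.mp hf).2
  have h1c : ∀ s, deriv f s = deriv f 0 := fun s =>
    is_const_of_deriv_eq_zero (hf1.differentiable (by simp)) h2 s 0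
  have h0c : ∀ s, f s = cub (f 0) (deriv f 0) 0 0 s := by
    refine eq_of_deriv_eq (hf.differentiable (by simp))
      (cub_differentiable _ _ _ _) (fun s => ?_) ?_
    · rw [h1c s, cub_deriv]; simp only [cub]; ring
    · simp only [cub]; ring
  rw [h0c t]; simp only [cub]; ring

/- ### pd2 machinery -/

lemma pd2_contDiff (j : Fin 2) {f : (Fin 2 → ℝ) → ℝ} (hf : ContDiff ℝ (⊤ : ℕ∞) f) :
    ContDiff ℝ (⊤ : ℕ∞) (pd2 j f) := by
  have h1 : ContDiff ℝ (⊤ : ℕ∞) (fderiv ℝ f) :=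
    hf.fderiv_right (by exact_mod_cast le_top)
  exact (ContinuousLinearMap.apply ℝ ℝ ((Pi.single j 1 : Fin 2 → ℝ))).contDiff.comp h1

lemma pd2_zero_of (j : Fin 2) {f : (Fin 2 → ℝ) → ℝ} (hz : ∀ x, f x = 0) (x : Fin 2 → ℝ) :
    pd2 j f x = 0 := by
  have : f = fun _ => (0 : ℝ) := funext hz
  rw [this]
  simp [pd2]

lemma hasDerivAt_slice {f : (Fin 2 → ℝ) → ℝ} (hf : Differentiable ℝ f)
    (j : Fin 2) (x : Fin 2 → ℝ) (t : ℝ) :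
    HasDerivAt (fun s : ℝ => f (x + s • (Pi.single j 1 : Fin 2 → ℝ))) (pd2 j f (x + t • (Pi.single j 1 : Fin 2 → ℝ))) t := by
  have hA : HasDerivAt (fun s : ℝ => x + s • (Pi.single j 1 : Fin 2 → ℝ)) ((Pi.single j 1 : Fin 2 → ℝ)) t := by
    simpa using ((hasDerivAt_id t).smul_const (Pi.single j 1 : Fin 2 → ℝ)).const_add x
  exact (hf _).hasFDerivAt.comp_hasDerivAt t hA

lemma deriv_slice {f : (Fin 2 → ℝ) → ℝ} (hf : Differentiable ℝ f)
    (j : Fin 2) (x : Fin 2 → ℝ) (t : ℝ) :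
    deriv (fun s : ℝ => f (x + s • (Pi.single j 1 : Fin 2 → ℝ))) t = pd2 j f (x + t • (Pi.single j 1 : Fin 2 → ℝ)) :=
  (hasDerivAt_slice hf j x t).deriv

lemma pd2_comm {f : (Fin 2 → ℝ) → ℝ} (hf : ContDiff ℝ (⊤ : ℕ∞) f) (i j : Fin 2) :
    pd2 i (pd2 j f) = pd2 j (pd2 i f) := by
  funext x
  have hd : DifferentiableAt ℝ (fderiv ℝ f) x :=
    ((hf.fderiv_right (m := (⊤ : ℕ∞)) (by exact_mod_cast le_top)).differentiable
      (by simp)) x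
  have hkey : ∀ k l : Fin 2, pd2 k (pd2 l f) x
      = fderiv ℝ (fderiv ℝ f) x (Pi.single k 1) (Pi.single l 1) := by
    intro k l
    have h1 : HasFDerivAt (⇑(ContinuousLinearMap.apply ℝ ℝ (Pi.single l (1:ℝ))) ∘ fderiv ℝ f)
        ((ContinuousLinearMap.apply ℝ ℝ (Pi.single l (1:ℝ))).comp (fderiv ℝ (fderiv ℝ f) x)) x :=
      ((ContinuousLinearMap.apply ℝ ℝ (Pi.single l (1:ℝ))).hasFDerivAt (x := fderiv ℝ f x)).comp x hd.hasFDerivAt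
    show fderiv ℝ (fun y => fderiv ℝ f y (Pi.single l 1)) x (Pi.single k 1) = _
    rw [show (fun y => fderiv ℝ f y (Pi.single l 1))
        = (⇑(ContinuousLinearMap.apply ℝ ℝ (Pi.single l (1:ℝ))) ∘ fderiv ℝ f) from rfl, h1.fderiv]
    rfl
  have hsymm : IsSymmSndFDerivAt ℝ f x :=
    hf.contDiffAt.isSymmSndFDerivAt (by simp [minSmoothness_of_isRCLikeNormedField]; exact WithTop.coe_le_coe.mpr (le_top : (2 : ℕ∞) ≤ ⊤))
  rw [hkey, hkey]
  exact hsymm _ _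

lemma slice_repr {h : (Fin 2 → ℝ) → ℝ} (hh : ContDiff ℝ (⊤ : ℕ∞) h) (j : Fin 2)
    (x : Fin 2 → ℝ) (h4 : ∀ y, pd2 j (pd2 j (pd2 j (pd2 j h))) y = 0) (t : ℝ) :
    h (x + t • (Pi.single j 1 : Fin 2 → ℝ)) = h x + pd2 j h x * t
      + pd2 j (pd2 j h) x / 2 * t ^ 2 + pd2 j (pd2 j (pd2 j h)) x / 6 * t ^ 3 := by
  set f : ℝ → ℝ := fun s => h (x + s • (Pi.single j 1 : Fin 2 → ℝ)) with hfdef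
  have hcomp : ContDiff ℝ (⊤ : ℕ∞) f :=
    hh.comp (contDiff_const.add (contDiff_id.smul contDiff_const))
  have d1 : deriv f = fun s => pd2 j h (x + s • (Pi.single j 1 : Fin 2 → ℝ)) :=
    funext fun s => deriv_slice (hh.differentiable (by simp)) j x s
  have d2 : deriv (deriv f)
      = fun s => pd2 j (pd2 j h) (x + s • (Pi.single j 1 : Fin 2 → ℝ)) := by
    rw [d1]
    exact funext fun s =>
      deriv_slice ((pd2_contDiff j hh).differentiable (by simp)) j x s
  have d3 : deriv (deriv (deriv f))
      = fun s => pd2 j (pd2 j (pd2 j h)) (x + s • (Pi.single j 1 : Fin 2 → ℝ)) := by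
    rw [d2]
    exact funext fun s =>
      deriv_slice ((pd2_contDiff j (pd2_contDiff j hh)).differentiable
        (by simp)) j x s
  have d4 : ∀ s, deriv (deriv (deriv (deriv f))) s = 0 := by
    intro s
    rw [d3, deriv_slice ((pd2_contDiff j (pd2_contDiff j (pd2_contDiff j hh))).differentiable
      (by simp)) j x s]
    exact h4 _
  have key := cubic_of_deriv4 hcomp d4 t
  have v0 : f 0 = h x := by rw [hfdef]; simp
  have v1 : deriv f 0 = pd2 j h x := by rw [d1]; simp
  have v2 : deriv (deriv f) 0 = pd2 j (pd2 j h) x := by rw [d2]; simp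
  have v3 : deriv (deriv (deriv f)) 0 = pd2 j (pd2 j (pd2 j h)) x := by rw [d3]; simp
  rw [v0, v1, v2, v3] at key
  exact key

lemma slice_repr_lin {h : (Fin 2 → ℝ) → ℝ} (hh : ContDiff ℝ (⊤ : ℕ∞) h) (j : Fin 2)
    (x : Fin 2 → ℝ) (h2 : ∀ y, pd2 j (pd2 j h) y = 0) (t : ℝ) :
    h (x + t • (Pi.single j 1 : Fin 2 → ℝ)) = h x + pd2 j h x * t := by
  set f : ℝ → ℝ := fun s => h (x + s • (Pi.single j 1 : Fin 2 → ℝ)) with hfdef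
  have hcomp : ContDiff ℝ (⊤ : ℕ∞) f :=
    hh.comp (contDiff_const.add (contDiff_id.smul contDiff_const))
  have d1 : deriv f = fun s => pd2 j h (x + s • (Pi.single j 1 : Fin 2 → ℝ)) :=
    funext fun s => deriv_slice (hh.differentiable (by simp)) j x s
  have d2 : ∀ s, deriv (deriv f) s = 0 := by
    intro s
    rw [d1, deriv_slice ((pd2_contDiff j hh).differentiable
      (by simp)) j x s]
    exact h2 _
  have key := linear_of_deriv2 hcomp d2 t
  have v0 : f 0 = h x := by rw [hfdef]; simp
  have v1 : deriv f 0 = pd2 j h x := by rw [d1]; simp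
  rw [v0, v1] at key
  exact key

/- ### product-form machinery for the reverse direction -/

def Tf (u v : ℝ → ℝ) : (Fin 2 → ℝ) → ℝ := fun x => u (x 0) * v (x 1)

lemma Tf_hasFDerivAt {u v u' v' : ℝ → ℝ} (hu : ∀ t, HasDerivAt u (u' t) t)
    (hv : ∀ t, HasDerivAt v (v' t) t) (x : Fin 2 → ℝ) :
    HasFDerivAt (Tf u v)
      (u (x 0) • (v' (x 1) • (ContinuousLinearMap.proj 1 : (Fin 2 → ℝ) →L[ℝ] ℝ))
        + v (x 1) • (u' (x 0) • (ContinuousLinearMap.proj 0 : (Fin 2 → ℝ) →L[ℝ] ℝ))) x := by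
  have hU := (hu (x 0)).comp_hasFDerivAt x
    ((ContinuousLinearMap.proj (R := ℝ) (φ := fun _ : Fin 2 => ℝ) 0).hasFDerivAt (x := x))
  have hV := (hv (x 1)).comp_hasFDerivAt x
    ((ContinuousLinearMap.proj (R := ℝ) (φ := fun _ : Fin 2 => ℝ) 1).hasFDerivAt (x := x))
  exact hU.mul hV

lemma Tf_differentiable {u v u' v' : ℝ → ℝ} (hu : ∀ t, HasDerivAt u (u' t) t)
    (hv : ∀ t, HasDerivAt v (v' t) t) : Differentiable ℝ (Tf u v) :=
  fun x => (Tf_hasFDerivAt hu hv x).differentiableAt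

lemma pd2_Tf0 {u v u' v' : ℝ → ℝ} (hu : ∀ t, HasDerivAt u (u' t) t)
    (hv : ∀ t, HasDerivAt v (v' t) t) :
    pd2 0 (Tf u v) = Tf u' v := by
  funext x
  show fderiv ℝ (Tf u v) x (Pi.single 0 1) = _
  rw [(Tf_hasFDerivAt hu hv x).fderiv]
  have e0 : (Pi.single 0 1 : Fin 2 → ℝ) 0 = 1 := by simp
  have e1 : (Pi.single 0 1 : Fin 2 → ℝ) 1 = 0 := by
    simp [Pi.single_apply]
  simp [Tf, ContinuousLinearMap.proj_apply, e0, e1]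
  all_goals ring

lemma pd2_Tf1 {u v u' v' : ℝ → ℝ} (hu : ∀ t, HasDerivAt u (u' t) t)
    (hv : ∀ t, HasDerivAt v (v' t) t) :
    pd2 1 (Tf u v) = Tf u v' := by
  funext x
  show fderiv ℝ (Tf u v) x (Pi.single 1 1) = _
  rw [(Tf_hasFDerivAt hu hv x).fderiv]
  have e0 : (Pi.single 1 1 : Fin 2 → ℝ) 0 = 0 := by
    simp [Pi.single_apply]
  have e1 : (Pi.single 1 1 : Fin 2 → ℝ) 1 = 1 := by simp
  simp [Tf, ContinuousLinearMap.proj_apply, e0, e1]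
  all_goals ring

lemma pd2_add4 (j : Fin 2) (f1 f2 f3 f4 : (Fin 2 → ℝ) → ℝ)
    (h1 : Differentiable ℝ f1) (h2 : Differentiable ℝ f2)
    (h3 : Differentiable ℝ f3) (h4 : Differentiable ℝ f4) :
    pd2 j (fun x => f1 x + f2 x + f3 x + f4 x)
      = fun x => pd2 j f1 x + pd2 j f2 x + pd2 j f3 x + pd2 j f4 x := by
  funext x
  show fderiv ℝ _ x _ = _
  rw [fderiv_fun_add (f := fun y => f1 y + f2 y + f3 y) (((h1 x).add (h2 x)).add (h3 x)) (h4 x),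
    fderiv_fun_add (f := fun y => f1 y + f2 y) ((h1 x).add (h2 x)) (h3 x), fderiv_fun_add (h1 x) (h2 x)]
  simp [pd2]

lemma pd2_Tf4_0 (p0 p1 p2 p3 P0 P1 P2 P3 q0 q1 q2 q3 Q0 Q1 Q2 Q3
    r0 r1 r2 r3 R0 R1 R2 R3 s0 s1 s2 s3 S0 S1 S2 S3 : ℝ) :
    pd2 0 (fun x => Tf (cub p0 p1 p2 p3) (cub P0 P1 P2 P3) x
        + Tf (cub q0 q1 q2 q3) (cub Q0 Q1 Q2 Q3) x
        + Tf (cub r0 r1 r2 r3) (cub R0 R1 R2 R3) x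
        + Tf (cub s0 s1 s2 s3) (cub S0 S1 S2 S3) x)
    = fun x => Tf (cub p1 (2*p2) (3*p3) 0) (cub P0 P1 P2 P3) x
        + Tf (cub q1 (2*q2) (3*q3) 0) (cub Q0 Q1 Q2 Q3) x
        + Tf (cub r1 (2*r2) (3*r3) 0) (cub R0 R1 R2 R3) x
        + Tf (cub s1 (2*s2) (3*s3) 0) (cub S0 S1 S2 S3) x := by
  rw [pd2_add4 0 _ _ _ _
      (Tf_differentiable (fun t => cub_hasDerivAt _ _ _ _ t) (fun t => cub_hasDerivAt _ _ _ _ t))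
      (Tf_differentiable (fun t => cub_hasDerivAt _ _ _ _ t) (fun t => cub_hasDerivAt _ _ _ _ t))
      (Tf_differentiable (fun t => cub_hasDerivAt _ _ _ _ t) (fun t => cub_hasDerivAt _ _ _ _ t))
      (Tf_differentiable (fun t => cub_hasDerivAt _ _ _ _ t) (fun t => cub_hasDerivAt _ _ _ _ t)),
    pd2_Tf0 (fun t => cub_hasDerivAt p0 p1 p2 p3 t) (fun t => cub_hasDerivAt P0 P1 P2 P3 t),
    pd2_Tf0 (fun t => cub_hasDerivAt q0 q1 q2 q3 t) (fun t => cub_hasDerivAt Q0 Q1 Q2 Q3 t),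
    pd2_Tf0 (fun t => cub_hasDerivAt r0 r1 r2 r3 t) (fun t => cub_hasDerivAt R0 R1 R2 R3 t),
    pd2_Tf0 (fun t => cub_hasDerivAt s0 s1 s2 s3 t) (fun t => cub_hasDerivAt S0 S1 S2 S3 t)]

lemma pd2_Tf4_1 (p0 p1 p2 p3 P0 P1 P2 P3 q0 q1 q2 q3 Q0 Q1 Q2 Q3
    r0 r1 r2 r3 R0 R1 R2 R3 s0 s1 s2 s3 S0 S1 S2 S3 : ℝ) :
    pd2 1 (fun x => Tf (cub p0 p1 p2 p3) (cub P0 P1 P2 P3) x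
        + Tf (cub q0 q1 q2 q3) (cub Q0 Q1 Q2 Q3) x
        + Tf (cub r0 r1 r2 r3) (cub R0 R1 R2 R3) x
        + Tf (cub s0 s1 s2 s3) (cub S0 S1 S2 S3) x)
    = fun x => Tf (cub p0 p1 p2 p3) (cub P1 (2*P2) (3*P3) 0) x
        + Tf (cub q0 q1 q2 q3) (cub Q1 (2*Q2) (3*Q3) 0) x
        + Tf (cub r0 r1 r2 r3) (cub R1 (2*R2) (3*R3) 0) x
        + Tf (cub s0 s1 s2 s3) (cub S1 (2*S2) (3*S3) 0) x := by
  rw [pd2_add4 1 _ _ _ _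
      (Tf_differentiable (fun t => cub_hasDerivAt _ _ _ _ t) (fun t => cub_hasDerivAt _ _ _ _ t))
      (Tf_differentiable (fun t => cub_hasDerivAt _ _ _ _ t) (fun t => cub_hasDerivAt _ _ _ _ t))
      (Tf_differentiable (fun t => cub_hasDerivAt _ _ _ _ t) (fun t => cub_hasDerivAt _ _ _ _ t))
      (Tf_differentiable (fun t => cub_hasDerivAt _ _ _ _ t) (fun t => cub_hasDerivAt _ _ _ _ t)),
    pd2_Tf1 (fun t => cub_hasDerivAt p0 p1 p2 p3 t) (fun t => cub_hasDerivAt P0 P1 P2 P3 t),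
    pd2_Tf1 (fun t => cub_hasDerivAt q0 q1 q2 q3 t) (fun t => cub_hasDerivAt Q0 Q1 Q2 Q3 t),
    pd2_Tf1 (fun t => cub_hasDerivAt r0 r1 r2 r3 t) (fun t => cub_hasDerivAt R0 R1 R2 R3 t),
    pd2_Tf1 (fun t => cub_hasDerivAt s0 s1 s2 s3 t) (fun t => cub_hasDerivAt S0 S1 S2 S3 t)]

/-- A smooth function `g : ℝ² → ℝ` satisfies `∂⁴g/∂x₁⁴ = 0`, `∂⁴g/∂x₂⁴ = 0` and
`∂⁴g/∂x₁²∂x₂² = 0` identically if and only if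
`g = p(x₁) + x₂q(x₁) + r(x₂) + x₁w(x₂)` with `p, q, r, w` polynomials of degree ≤ 3. -/
theorem quartic_vanishing_cubic_decomposition
    (g : (Fin 2 → ℝ) → ℝ) (hg : ContDiff ℝ (⊤ : ℕ∞) g) :
    ((∀ p, pd2 0 (pd2 0 (pd2 0 (pd2 0 g))) p = 0) ∧
     (∀ p, pd2 1 (pd2 1 (pd2 1 (pd2 1 g))) p = 0) ∧
     (∀ p, pd2 0 (pd2 0 (pd2 1 (pd2 1 g))) p = 0)) ↔
    ∃ p q r w : ℝ → ℝ,
      IsPolyDeg3 p ∧ IsPolyDeg3 q ∧ IsPolyDeg3 r ∧ IsPolyDeg3 w ∧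
      ∀ pt : Fin 2 → ℝ, g pt = p (pt 0) + pt 1 * q (pt 0) + r (pt 1) + pt 0 * w (pt 1) := by
  constructor
  · rintro ⟨h1, h2, h3⟩
    have s0 := pd2_contDiff 0 hg
    have s00 := pd2_contDiff 0 s0
    have s000 := pd2_contDiff 0 s00
    have key1 : pd2 1 (pd2 1 (pd2 1 (pd2 1 (pd2 0 g))))
        = pd2 0 (pd2 1 (pd2 1 (pd2 1 (pd2 1 g)))) := by
      rw [pd2_comm hg 1 0, pd2_comm (pd2_contDiff 1 hg) 1 0,
        pd2_comm (pd2_contDiff 1 (pd2_contDiff 1 hg)) 1 0,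
        pd2_comm (pd2_contDiff 1 (pd2_contDiff 1 (pd2_contDiff 1 hg))) 1 0]
    have z1 : ∀ y, pd2 1 (pd2 1 (pd2 1 (pd2 1 (pd2 0 g)))) y = 0 := by
      intro y; rw [key1]; exact pd2_zero_of 0 h2 y
    have key2 : pd2 1 (pd2 1 (pd2 0 (pd2 0 g)))
        = pd2 0 (pd2 0 (pd2 1 (pd2 1 g))) := by
      rw [pd2_comm s0 1 0, pd2_comm hg 1 0,
        pd2_comm (pd2_contDiff 0 (pd2_contDiff 1 hg)) 1 0,
        pd2_comm (pd2_contDiff 1 hg) 1 0]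
    have z2 : ∀ y, pd2 1 (pd2 1 (pd2 0 (pd2 0 g))) y = 0 := by
      intro y; rw [key2]; exact h3 y
    have key3 : pd2 1 (pd2 1 (pd2 0 (pd2 0 (pd2 0 g))))
        = pd2 0 (pd2 1 (pd2 1 (pd2 0 (pd2 0 g)))) := by
      rw [pd2_comm s00 1 0, pd2_comm (pd2_contDiff 1 s00) 1 0]
    have z3 : ∀ y, pd2 1 (pd2 1 (pd2 0 (pd2 0 (pd2 0 g)))) y = 0 := by
      intro y; rw [key3]; exact pd2_zero_of 0 z2 y
    have ebase : ∀ s : ℝ,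
        (0 : Fin 2 → ℝ) + s • (Pi.single 1 1 : Fin 2 → ℝ) = (Pi.single 1 s : Fin 2 → ℝ) := by
      intro s; funext i
      by_cases hi : i = 1 <;> simp [Pi.single_apply, hi]
    have epoint : ∀ x : Fin 2 → ℝ,
        (Pi.single 1 (x 1) : Fin 2 → ℝ) + (x 0) • (Pi.single 0 1 : Fin 2 → ℝ) = x := by
      intro x; funext i
      fin_cases i <;> simp [Pi.single_apply]
    have hA : ∀ x : Fin 2 → ℝ, g x = g (Pi.single 1 (x 1))
        + pd2 0 g (Pi.single 1 (x 1)) * x 0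
        + pd2 0 (pd2 0 g) (Pi.single 1 (x 1)) / 2 * (x 0) ^ 2
        + pd2 0 (pd2 0 (pd2 0 g)) (Pi.single 1 (x 1)) / 6 * (x 0) ^ 3 := by
      intro x
      have h := slice_repr hg 0 (Pi.single 1 (x 1)) h1 (x 0)
      rw [epoint x] at h
      exact h
    have hc0 : ∀ s : ℝ, g (Pi.single 1 s) = g 0 + pd2 1 g 0 * s
        + pd2 1 (pd2 1 g) 0 / 2 * s ^ 2 + pd2 1 (pd2 1 (pd2 1 g)) 0 / 6 * s ^ 3 := by
      intro s
      have h := slice_repr hg 1 0 h2 s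
      rw [ebase s] at h
      exact h
    have hc1 : ∀ s : ℝ, pd2 0 g (Pi.single 1 s) = pd2 0 g 0 + pd2 1 (pd2 0 g) 0 * s
        + pd2 1 (pd2 1 (pd2 0 g)) 0 / 2 * s ^ 2
        + pd2 1 (pd2 1 (pd2 1 (pd2 0 g))) 0 / 6 * s ^ 3 := by
      intro s
      have h := slice_repr s0 1 0 z1 s
      rw [ebase s] at h
      exact h
    have hc2 : ∀ s : ℝ, pd2 0 (pd2 0 g) (Pi.single 1 s)
        = pd2 0 (pd2 0 g) 0 + pd2 1 (pd2 0 (pd2 0 g)) 0 * s := by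
      intro s
      have h := slice_repr_lin s00 1 0 z2 s
      rw [ebase s] at h
      exact h
    have hc3 : ∀ s : ℝ, pd2 0 (pd2 0 (pd2 0 g)) (Pi.single 1 s)
        = pd2 0 (pd2 0 (pd2 0 g)) 0 + pd2 1 (pd2 0 (pd2 0 (pd2 0 g))) 0 * s := by
      intro s
      have h := slice_repr_lin s000 1 0 z3 s
      rw [ebase s] at h
      exact h
    refine ⟨fun t => pd2 0 (pd2 0 g) 0 / 2 * t ^ 2 + pd2 0 (pd2 0 (pd2 0 g)) 0 / 6 * t ^ 3,
      fun t => pd2 1 (pd2 0 (pd2 0 g)) 0 / 2 * t ^ 2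
        + pd2 1 (pd2 0 (pd2 0 (pd2 0 g))) 0 / 6 * t ^ 3,
      fun s => g (Pi.single 1 s), fun s => pd2 0 g (Pi.single 1 s), ?_, ?_, ?_, ?_, ?_⟩
    · exact ⟨0, 0, pd2 0 (pd2 0 g) 0 / 2, pd2 0 (pd2 0 (pd2 0 g)) 0 / 6, fun t => by ring⟩
    · exact ⟨0, 0, pd2 1 (pd2 0 (pd2 0 g)) 0 / 2, pd2 1 (pd2 0 (pd2 0 (pd2 0 g))) 0 / 6,
        fun t => by ring⟩
    · exact ⟨g 0, pd2 1 g 0, pd2 1 (pd2 1 g) 0 / 2, pd2 1 (pd2 1 (pd2 1 g)) 0 / 6,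
        fun t => hc0 t⟩
    · exact ⟨pd2 0 g 0, pd2 1 (pd2 0 g) 0, pd2 1 (pd2 1 (pd2 0 g)) 0 / 2,
        pd2 1 (pd2 1 (pd2 1 (pd2 0 g))) 0 / 6, fun t => hc1 t⟩
    · intro pt
      rw [hA pt, hc2 (pt 1), hc3 (pt 1)]
      ring
  · rintro ⟨p, q, r, w, ⟨a0, a1, a2, a3, hp⟩, ⟨b0, b1, b2, b3, hq⟩,
      ⟨c0, c1, c2, c3, hr⟩, ⟨d0, d1, d2, d3, hw⟩, hrep⟩
    have gEq : g = fun x => Tf (cub a0 a1 a2 a3) (cub 1 0 0 0) x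
        + Tf (cub b0 b1 b2 b3) (cub 0 1 0 0) x
        + Tf (cub 1 0 0 0) (cub c0 c1 c2 c3) x
        + Tf (cub 0 1 0 0) (cub d0 d1 d2 d3) x := by
      funext x
      rw [hrep x, hp, hq, hr, hw]
      simp only [Tf, cub]
      ring
    refine ⟨?_, ?_, ?_⟩
    · intro y
      rw [gEq, pd2_Tf4_0, pd2_Tf4_0, pd2_Tf4_0, pd2_Tf4_0]
      simp only [Tf, cub]
      ring
    · intro y
      rw [gEq, pd2_Tf4_1, pd2_Tf4_1, pd2_Tf4_1, pd2_Tf4_1]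
      simp only [Tf, cub]
      ring
    · intro y
      rw [gEq, pd2_Tf4_1, pd2_Tf4_1, pd2_Tf4_0, pd2_Tf4_0]
      simp only [Tf, cub]
      ring
end

section
/- Let α, β, γ : ℝ³ → ℝ be smooth functions and let c, k₁, k₂, k₃ ∈ ℝ. Define the displacement field u : ℝ³ → ℝ³ by u₁ = ∂α/∂x₂ + ∂β/∂x₃ + (c/3)x₁ + k₁, u₂ = −∂α/∂x₁ + ∂γ/∂x₃ + (c/3)x₂ + k₂, u₃ = −∂β/∂x₁ − ∂γ/∂x₂ + (c/3)x₃ + k₃. Then div u = c identically on ℝ³, so grad(div u) = 0; moreover Δu = 0 if and only if ∂(Δα)/∂x₂ + ∂(Δβ)/∂x₃ = 0, ∂(Δα)/∂x₁ − ∂(Δγ)/∂x₃ = 0, and ∂(Δβ)/∂x₁ + ∂(Δγ)/∂x₂ = 0 identically, in which case u satisfies all six universality constraints of isotropic linear elasticity (equivalently, Δu = 0 and grad(div u) = 0). -/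
/-- Partial derivative of a scalar field on `ℝ³` in the `j`-th coordinate direction. -/
noncomputable def pd (j : Fin 3) (f : (Fin 3 → ℝ) → ℝ) : (Fin 3 → ℝ) → ℝ :=
  fun x => fderiv ℝ f x (Pi.single j 1)

/-- The `i`-th component of a vector field on `ℝ³`. -/
def comp (u : (Fin 3 → ℝ) → Fin 3 → ℝ) (i : Fin 3) : (Fin 3 → ℝ) → ℝ :=
  fun x => u x i

/-- Second partial derivative `∂²uᵢ/∂xⱼ∂xₖ` of the `i`-th component of `u`. -/
noncomputable def pdd (j k : Fin 3) (u : (Fin 3 → ℝ) → Fin 3 → ℝ) (i : Fin 3) :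
    (Fin 3 → ℝ) → ℝ :=
  pd j (pd k (comp u i))

/-- The Laplacian of a scalar field on `ℝ³`. -/
noncomputable def lap (f : (Fin 3 → ℝ) → ℝ) : (Fin 3 → ℝ) → ℝ :=
  fun x => pd 0 (pd 0 f) x + pd 1 (pd 1 f) x + pd 2 (pd 2 f) x

/-- The divergence of a vector field on `ℝ³`. -/
noncomputable def diverg (u : (Fin 3 → ℝ) → Fin 3 → ℝ) : (Fin 3 → ℝ) → ℝ :=
  fun x => pd 0 (comp u 0) x + pd 1 (comp u 1) x + pd 2 (comp u 2) x

/-! ### Auxiliary lemmas -/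

lemma pd_neg (f : (Fin 3 → ℝ) → ℝ) (j : Fin 3) (x : Fin 3 → ℝ) :
    pd j (fun y => -f y) x = -(pd j f x) := by
  simp [pd, fderiv_neg]

lemma contDiff_pd {f : (Fin 3 → ℝ) → ℝ} (hf : ContDiff ℝ (⊤ : ℕ∞) f) (j : Fin 3) :
    ContDiff ℝ (⊤ : ℕ∞) (pd j f) :=
  (hf.fderiv_right (m := (⊤:ℕ∞)) (by simp)).clm_apply contDiff_const

lemma diff_pd {f : (Fin 3 → ℝ) → ℝ} (hf : ContDiff ℝ (⊤ : ℕ∞) f) (j : Fin 3) :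
    Differentiable ℝ (pd j f) :=
  (contDiff_pd hf j).differentiable (by simp)

lemma pd_swap {f : (Fin 3 → ℝ) → ℝ} (hf : ContDiff ℝ (⊤ : ℕ∞) f) (j k : Fin 3)
    (x : Fin 3 → ℝ) : pd j (pd k f) x = pd k (pd j f) x := by
  have hdf : Differentiable ℝ (fderiv ℝ f) :=
    (hf.fderiv_right (m := (⊤:ℕ∞)) (by simp)).differentiable (by simp)
  have h2 : ∀ a b : Fin 3, pd a (pd b f) x
      = fderiv ℝ (fderiv ℝ f) x (Pi.single a 1) (Pi.single b 1) := by
    intro a b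
    have : pd b f = fun y => (fderiv ℝ f y)
        ((fun _ : Fin 3 → ℝ => (Pi.single b 1 : Fin 3 → ℝ)) y) := rfl
    rw [pd, this, fderiv_clm_apply (hdf x) (differentiableAt_const _)]
    simp
  rw [h2, h2]
  exact second_derivative_symmetric
    (fun y => (hf.differentiable (by simp) y).hasFDerivAt)
    (hdf x).hasFDerivAt _ _

lemma fderiv_coord (i : Fin 3) (x : Fin 3 → ℝ) :
    fderiv ℝ (fun y : Fin 3 → ℝ => y i) x = ContinuousLinearMap.proj i :=
  (ContinuousLinearMap.proj i : (Fin 3 → ℝ) →L[ℝ] ℝ).fderiv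

lemma diffAt_coord (i : Fin 3) (x : Fin 3 → ℝ) :
    DifferentiableAt ℝ (fun y : Fin 3 → ℝ => y i) x :=
  (ContinuousLinearMap.proj i : (Fin 3 → ℝ) →L[ℝ] ℝ).differentiableAt

lemma pd_add3 {p q r : (Fin 3 → ℝ) → ℝ} (hp : Differentiable ℝ p)
    (hq : Differentiable ℝ q) (hr : Differentiable ℝ r) (j : Fin 3) (x : Fin 3 → ℝ) :
    pd j (fun y => p y + q y + r y) x = pd j p x + pd j q x + pd j r x := by
  simp only [pd]
  rw [fderiv_fun_add (((hp x).fun_add (hq x))) (hr x), fderiv_fun_add (hp x) (hq x)]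
  simp

lemma pd_add2_const {p q : (Fin 3 → ℝ) → ℝ} (hp : Differentiable ℝ p)
    (hq : Differentiable ℝ q) (C : ℝ) (j : Fin 3) (x : Fin 3 → ℝ) :
    pd j (fun y => p y + q y + C) x = pd j p x + pd j q x := by
  simp only [pd]
  rw [fderiv_add_const, fderiv_fun_add (hp x) (hq x)]
  simp

lemma pd_affine {p q : (Fin 3 → ℝ) → ℝ} (hp : Differentiable ℝ p)
    (hq : Differentiable ℝ q) (a k : ℝ) (i j : Fin 3) (x : Fin 3 → ℝ) :
    pd j (fun y => p y + q y + a * y i + k) x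
      = pd j p x + pd j q x + (if j = i then a else 0) := by
  simp only [pd]
  rw [fderiv_add_const,
    fderiv_fun_add (((hp x).fun_add (hq x))) ((diffAt_coord i x).const_mul a),
    fderiv_fun_add (hp x) (hq x), fderiv_const_mul (diffAt_coord i x) a, fderiv_coord]
  simp [Pi.single_apply, mul_ite, eq_comm]

lemma pd3_swapI {f : (Fin 3 → ℝ) → ℝ} (hf : ContDiff ℝ (⊤ : ℕ∞) f) (a b c : Fin 3)
    (x : Fin 3 → ℝ) : pd a (pd b (pd c f)) x = pd a (pd c (pd b f)) x := by
  rw [show pd b (pd c f) = pd c (pd b f) from funext fun y => pd_swap hf b c y]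

lemma pd3_swapO {f : (Fin 3 → ℝ) → ℝ} (hf : ContDiff ℝ (⊤ : ℕ∞) f) (a b c : Fin 3)
    (x : Fin 3 → ℝ) : pd a (pd b (pd c f)) x = pd b (pd a (pd c f)) x :=
  pd_swap (contDiff_pd hf c) a b x

lemma pd3_comm {f : (Fin 3 → ℝ) → ℝ} (hf : ContDiff ℝ (⊤ : ℕ∞) f) (a b c : Fin 3)
    (x : Fin 3 → ℝ) : pd a (pd b (pd c f)) x = pd c (pd b (pd a f)) x :=
  (pd3_swapI hf a b c x).trans ((pd3_swapO hf a c b x).trans (pd3_swapI hf c a b x))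

variable {f : (Fin 3 → ℝ) → ℝ}

lemma sort221 (hf : ContDiff ℝ (⊤ : ℕ∞) f) (x : Fin 3 → ℝ) :
    pd 2 (pd 2 (pd 1 f)) x = pd 1 (pd 2 (pd 2 f)) x :=
  (pd3_swapI hf 2 2 1 x).trans (pd3_swapO hf 2 1 2 x)
lemma sort020 (hf : ContDiff ℝ (⊤ : ℕ∞) f) (x : Fin 3 → ℝ) :
    pd 0 (pd 2 (pd 0 f)) x = pd 0 (pd 0 (pd 2 f)) x := pd3_swapI hf 0 2 0 x
lemma sort021 (hf : ContDiff ℝ (⊤ : ℕ∞) f) (x : Fin 3 → ℝ) :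
    pd 0 (pd 2 (pd 1 f)) x = pd 0 (pd 1 (pd 2 f)) x := pd3_swapI hf 0 2 1 x
lemma sort010 (hf : ContDiff ℝ (⊤ : ℕ∞) f) (x : Fin 3 → ℝ) :
    pd 0 (pd 1 (pd 0 f)) x = pd 0 (pd 0 (pd 1 f)) x := pd3_swapI hf 0 1 0 x
lemma sort220 (hf : ContDiff ℝ (⊤ : ℕ∞) f) (x : Fin 3 → ℝ) :
    pd 2 (pd 2 (pd 0 f)) x = pd 0 (pd 2 (pd 2 f)) x := pd3_comm hf 2 2 0 x
lemma sort120 (hf : ContDiff ℝ (⊤ : ℕ∞) f) (x : Fin 3 → ℝ) :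
    pd 1 (pd 2 (pd 0 f)) x = pd 0 (pd 1 (pd 2 f)) x :=
  (pd3_comm hf 1 2 0 x).trans (pd3_swapI hf 0 2 1 x)
lemma sort121 (hf : ContDiff ℝ (⊤ : ℕ∞) f) (x : Fin 3 → ℝ) :
    pd 1 (pd 2 (pd 1 f)) x = pd 1 (pd 1 (pd 2 f)) x := pd3_swapI hf 1 2 1 x
lemma sort110 (hf : ContDiff ℝ (⊤ : ℕ∞) f) (x : Fin 3 → ℝ) :
    pd 1 (pd 1 (pd 0 f)) x = pd 0 (pd 1 (pd 1 f)) x := pd3_comm hf 1 1 0 x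
lemma sort100 (hf : ContDiff ℝ (⊤ : ℕ∞) f) (x : Fin 3 → ℝ) :
    pd 1 (pd 0 (pd 0 f)) x = pd 0 (pd 0 (pd 1 f)) x := pd3_comm hf 1 0 0 x
lemma sort200 (hf : ContDiff ℝ (⊤ : ℕ∞) f) (x : Fin 3 → ℝ) :
    pd 2 (pd 0 (pd 0 f)) x = pd 0 (pd 0 (pd 2 f)) x := pd3_comm hf 2 0 0 x
lemma sort211 (hf : ContDiff ℝ (⊤ : ℕ∞) f) (x : Fin 3 → ℝ) :
    pd 2 (pd 1 (pd 1 f)) x = pd 1 (pd 1 (pd 2 f)) x := pd3_comm hf 2 1 1 x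

lemma pd_lap (hf : ContDiff ℝ (⊤ : ℕ∞) f) (x : Fin 3 → ℝ) (j : Fin 3) :
    pd j (lap f) x
    = pd j (pd 0 (pd 0 f)) x + pd j (pd 1 (pd 1 f)) x + pd j (pd 2 (pd 2 f)) x := by
  have h : lap f = fun y => pd 0 (pd 0 f) y + pd 1 (pd 1 f) y + pd 2 (pd 2 f) y := rfl
  rw [h]
  exact pd_add3 (diff_pd (contDiff_pd hf 0) 0) (diff_pd (contDiff_pd hf 1) 1)
    (diff_pd (contDiff_pd hf 2) 2) j x

/-- For the potential representation
`u₁ = ∂α/∂x₂ + ∂β/∂x₃ + (c/3)x₁ + k₁`, `u₂ = −∂α/∂x₁ + ∂γ/∂x₃ + (c/3)x₂ + k₂`,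
`u₃ = −∂β/∂x₁ − ∂γ/∂x₂ + (c/3)x₃ + k₃` one has `div u = c` identically, hence
`grad (div u) = 0`; moreover `Δu = 0` holds if and only if
`∂(Δα)/∂x₂ + ∂(Δβ)/∂x₃ = 0`, `∂(Δα)/∂x₁ − ∂(Δγ)/∂x₃ = 0` and
`∂(Δβ)/∂x₁ + ∂(Δγ)/∂x₂ = 0`, in which case `u` satisfies all six universality
constraints of isotropic linear elasticity. -/
theorem isotropic_potential_representation
    (α β γ : (Fin 3 → ℝ) → ℝ)
    (hα : ContDiff ℝ (⊤ : ℕ∞) α) (hβ : ContDiff ℝ (⊤ : ℕ∞) β)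
    (hγ : ContDiff ℝ (⊤ : ℕ∞) γ)
    (c k₁ k₂ k₃ : ℝ)
    (u : (Fin 3 → ℝ) → Fin 3 → ℝ)
    (hu : ∀ x, u x = ![pd 1 α x + pd 2 β x + (c / 3) * x 0 + k₁,
                       -pd 0 α x + pd 2 γ x + (c / 3) * x 1 + k₂,
                       -pd 0 β x - pd 1 γ x + (c / 3) * x 2 + k₃]) :
    (∀ x, diverg u x = c) ∧
    (∀ j : Fin 3, ∀ x, pd j (diverg u) x = 0) ∧
    ((∀ i : Fin 3, ∀ x, lap (comp u i) x = 0) ↔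
      ((∀ x, pd 1 (lap α) x + pd 2 (lap β) x = 0) ∧
       (∀ x, pd 0 (lap α) x - pd 2 (lap γ) x = 0) ∧
       (∀ x, pd 0 (lap β) x + pd 1 (lap γ) x = 0))) ∧
    (((∀ x, pd 1 (lap α) x + pd 2 (lap β) x = 0) ∧
      (∀ x, pd 0 (lap α) x - pd 2 (lap γ) x = 0) ∧
      (∀ x, pd 0 (lap β) x + pd 1 (lap γ) x = 0)) →
      ((∀ x, pdd 2 2 u 0 x + pdd 1 1 u 0 x + pdd 0 2 u 2 x + pdd 0 1 u 1 x
          + 2 * pdd 0 0 u 0 x = 0) ∧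
       (∀ x, -pdd 2 2 u 0 x - pdd 1 1 u 0 x + pdd 0 2 u 2 x + pdd 0 1 u 1 x = 0) ∧
       (∀ x, pdd 2 2 u 1 x + pdd 1 2 u 2 x + 2 * pdd 1 1 u 1 x + pdd 0 1 u 0 x
          + pdd 0 0 u 1 x = 0) ∧
       (∀ x, -pdd 2 2 u 1 x + pdd 1 2 u 2 x + pdd 0 1 u 0 x - pdd 0 0 u 1 x = 0) ∧
       (∀ x, 2 * pdd 2 2 u 2 x + pdd 1 2 u 1 x + pdd 1 1 u 2 x + pdd 0 2 u 0 x
          + pdd 0 0 u 2 x = 0) ∧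
       (∀ x, pdd 1 2 u 1 x - pdd 1 1 u 2 x + pdd 0 2 u 0 x - pdd 0 0 u 2 x = 0))) := by
  -- component formulas
  have hcomp0 : comp u 0 = fun x => pd 1 α x + pd 2 β x + c / 3 * x 0 + k₁ :=
    funext fun x => by simp [comp, hu x]
  have hcomp1 : comp u 1 = fun x => (fun y => -pd 0 α y) x + pd 2 γ x + c / 3 * x 1 + k₂ :=
    funext fun x => by simp [comp, hu x]
  have hcomp2 : comp u 2 = fun x => (fun y => -pd 0 β y) x + (fun y => -pd 1 γ y) x
      + c / 3 * x 2 + k₃ :=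
    funext fun x => by simp [comp, hu x]; ring
  -- first derivatives of the components
  have hD0 : ∀ (j : Fin 3) x, pd j (comp u 0) x
      = pd j (pd 1 α) x + pd j (pd 2 β) x + (if j = 0 then c / 3 else 0) := by
    intro j x
    rw [hcomp0]
    exact pd_affine (diff_pd hα 1) (diff_pd hβ 2) _ _ _ _ _
  have hD1 : ∀ (j : Fin 3) x, pd j (comp u 1) x
      = -pd j (pd 0 α) x + pd j (pd 2 γ) x + (if j = 1 then c / 3 else 0) := by
    intro j x
    rw [hcomp1, pd_affine ((diff_pd hα 0).fun_neg) (diff_pd hγ 2) _ _ _ _ _, pd_neg]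
  have hD2 : ∀ (j : Fin 3) x, pd j (comp u 2) x
      = -pd j (pd 0 β) x - pd j (pd 1 γ) x + (if j = 2 then c / 3 else 0) := by
    intro j x
    rw [hcomp2, pd_affine ((diff_pd hβ 0).fun_neg) ((diff_pd hγ 1).fun_neg) _ _ _ _ _,
      pd_neg, pd_neg]
    ring
  -- divergence is constant
  have hdivc : ∀ x, diverg u x = c := by
    intro x
    have A := hD0 0 x; have B := hD1 1 x; have C := hD2 2 x
    rw [if_pos rfl] at A B C
    have s1 := pd_swap hα 0 1 x
    have s2 := pd_swap hβ 0 2 x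
    have s3 := pd_swap hγ 1 2 x
    show pd 0 (comp u 0) x + pd 1 (comp u 1) x + pd 2 (comp u 2) x = c
    rw [A, B, C]; linarith
  -- second derivatives of the components
  have hDD0 : ∀ (j k : Fin 3) x, pdd j k u 0 x
      = pd j (pd k (pd 1 α)) x + pd j (pd k (pd 2 β)) x := by
    intro j k x
    have h : pd k (comp u 0) = fun y => pd k (pd 1 α) y + pd k (pd 2 β) y
        + (if k = 0 then c / 3 else 0) := funext (hD0 k)
    show pd j (pd k (comp u 0)) x = _
    rw [h, pd_add2_const (diff_pd (contDiff_pd hα 1) k) (diff_pd (contDiff_pd hβ 2) k)]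
  have hDD1 : ∀ (j k : Fin 3) x, pdd j k u 1 x
      = -pd j (pd k (pd 0 α)) x + pd j (pd k (pd 2 γ)) x := by
    intro j k x
    have h : pd k (comp u 1) = fun y => (fun z => -pd k (pd 0 α) z) y + pd k (pd 2 γ) y
        + (if k = 1 then c / 3 else 0) := funext (hD1 k)
    show pd j (pd k (comp u 1)) x = _
    rw [h, pd_add2_const ((diff_pd (contDiff_pd hα 0) k).fun_neg)
      (diff_pd (contDiff_pd hγ 2) k), pd_neg]
  have hDD2 : ∀ (j k : Fin 3) x, pdd j k u 2 x
      = -pd j (pd k (pd 0 β)) x - pd j (pd k (pd 1 γ)) x := by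
    intro j k x
    have h : pd k (comp u 2) = fun y => (fun z => -pd k (pd 0 β) z) y
        + (fun z => -pd k (pd 1 γ) z) y + (if k = 2 then c / 3 else 0) := by
      funext y
      rw [hD2 k y]; ring
    show pd j (pd k (comp u 2)) x = _
    rw [h, pd_add2_const ((diff_pd (contDiff_pd hβ 0) k).fun_neg)
      ((diff_pd (contDiff_pd hγ 1) k).fun_neg), pd_neg, pd_neg]
    ring
  -- Laplacians of the components
  have hlap0 : ∀ x, lap (comp u 0) x = pd 1 (lap α) x + pd 2 (lap β) x := by
    intro x
    have e : lap (comp u 0) x = pdd 0 0 u 0 x + pdd 1 1 u 0 x + pdd 2 2 u 0 x := rfl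
    rw [e, hDD0 0 0 x, hDD0 1 1 x, hDD0 2 2 x, pd_lap hα x 1, pd_lap hβ x 2,
      sort221 hα x, sort100 hα x, sort200 hβ x]
    have a1 := sort121 hα x; have b1 := sort211 hβ x
    linarith
  have hlap1 : ∀ x, lap (comp u 1) x = -(pd 0 (lap α) x - pd 2 (lap γ) x) := by
    intro x
    have e : lap (comp u 1) x = pdd 0 0 u 1 x + pdd 1 1 u 1 x + pdd 2 2 u 1 x := rfl
    rw [e, hDD1 0 0 x, hDD1 1 1 x, hDD1 2 2 x, pd_lap hα x 0, pd_lap hγ x 2]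
    have a1 := sort110 hα x; have a2 := sort220 hα x
    have g1 := sort200 hγ x; have g2 := sort211 hγ x; have g3 := sort221 hγ x
    have g4 := sort121 hγ x
    linarith
  have hlap2 : ∀ x, lap (comp u 2) x = -(pd 0 (lap β) x + pd 1 (lap γ) x) := by
    intro x
    have e : lap (comp u 2) x = pdd 0 0 u 2 x + pdd 1 1 u 2 x + pdd 2 2 u 2 x := rfl
    rw [e, hDD2 0 0 x, hDD2 1 1 x, hDD2 2 2 x, pd_lap hβ x 0, pd_lap hγ x 1]
    have b1 := sort110 hβ x; have b2 := sort220 hβ x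
    have g1 := sort100 hγ x; have g2 := sort121 hγ x; have g3 := sort221 hγ x
    linarith
  refine ⟨hdivc, ?_, ?_, ?_⟩
  · intro j x
    rw [show diverg u = fun _ => c from funext hdivc]
    simp [pd]
  · -- the iff
    constructor
    · intro h
      exact ⟨fun x => by have := h 0 x; rw [hlap0 x] at this; linarith,
              fun x => by have := h 1 x; rw [hlap1 x] at this; linarith,
              fun x => by have := h 2 x; rw [hlap2 x] at this; linarith⟩
    · rintro ⟨hA, hB, hC⟩ i x
      fin_cases i
      · show lap (comp u 0) x = 0
        rw [hlap0 x]; have := hA x; linarith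
      · show lap (comp u 1) x = 0
        rw [hlap1 x]; have := hB x; linarith
      · show lap (comp u 2) x = 0
        rw [hlap2 x]; have := hC x; linarith
  · -- the six constraints
    rintro ⟨hC1, hC2, hC3⟩
    have EC1 : ∀ x, pd 0 (pd 0 (pd 1 α)) x + pd 1 (pd 1 (pd 1 α)) x
        + pd 1 (pd 2 (pd 2 α)) x + pd 0 (pd 0 (pd 2 β)) x
        + pd 1 (pd 1 (pd 2 β)) x + pd 2 (pd 2 (pd 2 β)) x = 0 := by
      intro x
      have h := hC1 x
      rw [pd_lap hα x 1, pd_lap hβ x 2, sort100 hα x, sort200 hβ x, sort211 hβ x] at h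
      have a1 := sort121 hα x
      linarith
    have EC2 : ∀ x, pd 0 (pd 0 (pd 0 α)) x + pd 0 (pd 1 (pd 1 α)) x
        + pd 0 (pd 2 (pd 2 α)) x - pd 0 (pd 0 (pd 2 γ)) x
        - pd 1 (pd 1 (pd 2 γ)) x - pd 2 (pd 2 (pd 2 γ)) x = 0 := by
      intro x
      have h := hC2 x
      rw [pd_lap hα x 0, pd_lap hγ x 2, sort200 hγ x, sort211 hγ x] at h
      linarith
    have EC3 : ∀ x, pd 0 (pd 0 (pd 0 β)) x + pd 0 (pd 1 (pd 1 β)) x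
        + pd 0 (pd 2 (pd 2 β)) x + pd 0 (pd 0 (pd 1 γ)) x
        + pd 1 (pd 1 (pd 1 γ)) x + pd 1 (pd 2 (pd 2 γ)) x = 0 := by
      intro x
      have h := hC3 x
      rw [pd_lap hβ x 0, pd_lap hγ x 1, sort100 hγ x] at h
      have g1 := sort121 hγ x
      linarith
    refine ⟨?_, ?_, ?_, ?_, ?_, ?_⟩
    · intro x
      rw [hDD0 2 2 x, hDD0 1 1 x, hDD2 0 2 x, hDD1 0 1 x, hDD0 0 0 x]
      have h1 := sort221 hα x; have h2 := sort020 hβ x; have h3 := sort021 hγ x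
      have h4 := sort010 hα x; have h5 := EC1 x
      linarith
    · intro x
      rw [hDD0 2 2 x, hDD0 1 1 x, hDD2 0 2 x, hDD1 0 1 x]
      have h1 := sort221 hα x; have h2 := sort020 hβ x; have h3 := sort021 hγ x
      have h4 := sort010 hα x; have h5 := EC1 x
      linarith
    · intro x
      rw [hDD1 2 2 x, hDD2 1 2 x, hDD1 1 1 x, hDD0 0 1 x, hDD1 0 0 x]
      have h1 := sort220 hα x; have h2 := sort120 hβ x; have h3 := sort121 hγ x
      have h4 := sort110 hα x; have h5 := sort010 hα x; have h6 := sort021 hγ x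
      have h7 := EC2 x
      linarith
    · intro x
      rw [hDD1 2 2 x, hDD2 1 2 x, hDD0 0 1 x, hDD1 0 0 x]
      have h1 := sort220 hα x; have h2 := sort120 hβ x; have h3 := sort121 hγ x
      have h4 := sort110 hα x; have h5 := sort010 hα x; have h6 := sort021 hγ x
      have h7 := EC2 x
      linarith
    · intro x
      rw [hDD2 2 2 x, hDD1 1 2 x, hDD2 1 1 x, hDD0 0 2 x, hDD2 0 0 x]
      have h1 := sort220 hβ x; have h2 := sort221 hγ x; have h3 := sort120 hα x
      have h4 := sort121 hγ x; have h5 := sort110 hβ x; have h6 := sort021 hα x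
      have h7 := sort020 hβ x; have h8 := EC3 x
      linarith
    · intro x
      rw [hDD1 1 2 x, hDD2 1 1 x, hDD0 0 2 x, hDD2 0 0 x]
      have h1 := sort120 hα x; have h2 := sort121 hγ x; have h3 := sort110 hβ x
      have h4 := sort021 hα x; have h5 := sort020 hβ x; have h6 := EC3 x
      linarith
end
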